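/- arXiv:2602.16838 — 2 statements merged into one kernel-verified Lean document; each statement's English description precedes it below -/
import Mathlib

section
/- Let p > 0, let r ≥ 2, let (Ω_i, 𝓕_i, P_i), 1 ≤ i ≤ r, be probability spaces, let X_i : Ω_i → [0,∞) be measurable, let f_i : Ω_i → [0,∞) be measurable for 1 ≤ i ≤ r−1, and let g : Ω_r × [0,∞) → [0,∞) be measurable. Write S(ω) = ∑_{i=1}^{r−1} X_i(ω_i) for ω = (ω_1, …, ω_r). Then, with μ_p the exponential distribution with rate p, ∫ 1_{{S(ω) < ℓ ≤ S(ω) + X_r(ω_r)}} ∏_{i=1}^{r−1} f_i(ω_i) · g(ω_r, ℓ − S(ω)) d(P_1 ⊗ ⋯ ⊗ P_r ⊗ μ_p)(ω, ℓ) = ∏_{i=1}^{r−1} [∫ f_i(ω_i) 1_{{X_i(ω_i) < ℓ_i}} d(P_i ⊗ μ_p)(ω_i, ℓ_i)] · ∫ g(ω_r, ℓ_r) 1_{{ℓ_r ≤ X_r(ω_r)}} d(P_r ⊗ μ_p)(ω_r, ℓ_r). -/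
/-! Integrate first in the exponential time `ℓ`. By memorylessness of `μ_p`, the window
`S < ℓ ≤ S + X_r` contributes `e^{-pS}` times the integral of `g` over the window `ℓ ≤ X_r`
started afresh. Since `e^{-pS} = ∏ e^{-p X_i} = ∏ μ_p (X_i, ∞)`, Tonelli over the independent
coordinates of `P_1 ⊗ ⋯ ⊗ P_{r-1}` splits what remains into the stated product. -/

open MeasureTheory ProbabilityTheory NNReal ENNReal Real Set

lemma ofReal_exp_neg_mul_sum {ι : Type*} (s : Finset ι) (p : ℝ) (x : ι → ℝ) :
    ENNReal.ofReal (exp (-(p * ∑ i ∈ s, x i))) = ∏ i ∈ s, ENNReal.ofReal (exp (-(p * x i))) := by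
  rw [← ENNReal.ofReal_prod_of_nonneg fun i _ => (exp_pos _).le, ← exp_sum, Finset.mul_sum,
    Finset.sum_neg_distrib]

namespace MeasureTheory

variable {α β : Type*} [MeasurableSpace α] [MeasurableSpace β]

theorem setLIntegral_prod_eq_lintegral_setLIntegral_preimage {μ : Measure α} {ν : Measure β}
    [SFinite ν] {s : Set (α × β)} (hs : MeasurableSet s) {f : α × β → ℝ≥0∞}
    (hf : Measurable f) :
    ∫⁻ z in s, f z ∂μ.prod ν = ∫⁻ x, ∫⁻ y in Prod.mk x ⁻¹' s, f (x, y) ∂ν ∂μ := by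
  rw [← lintegral_indicator hs, lintegral_prod _ (hf.indicator hs).aemeasurable]
  refine lintegral_congr fun x => ?_
  rw [← lintegral_indicator (measurable_prodMk_left hs)]
  rfl

theorem lintegral_pi_prod_eq_prod {ι : Type*} [Fintype ι] {Ω : ι → Type*}
    [∀ i, MeasurableSpace (Ω i)] (μ : ∀ i, Measure (Ω i)) [∀ i, IsProbabilityMeasure (μ i)]
    {F : ∀ i, Ω i → ℝ≥0∞} (hF : ∀ i, Measurable (F i)) :
    ∫⁻ ω, ∏ i, F i (ω i) ∂Measure.pi μ = ∏ i, ∫⁻ x, F i x ∂μ i := by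
  rw [lintegral_prod_eq_prod_lintegral_of_indepFun _ _
    (iIndepFun_pi fun i => (hF i).aemeasurable) fun i => (hF i).comp (measurable_pi_apply i)]
  exact Finset.prod_congr rfl fun i _ => (measurePreserving_eval μ i).lintegral_comp (hF i)

end MeasureTheory

namespace ProbabilityTheory

lemma expMeasure_eq_withDensity (p : ℝ) :
    expMeasure p = volume.withDensity (exponentialPDF p) := rfl

lemma measurable_exponentialPDF (p : ℝ) : Measurable (exponentialPDF p) :=
  (measurable_exponentialPDFReal p).ennreal_ofReal

instance (p : ℝ) : SFinite (expMeasure p) := by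
  rw [expMeasure_eq_withDensity]; infer_instance

instance (p : ℝ) : NullSingletonClass (expMeasure p) := by
  rw [expMeasure_eq_withDensity]; infer_instance

lemma exponentialPDF_add_of_nonneg {p s t : ℝ} (hs : 0 ≤ s) (ht : 0 ≤ t) :
    exponentialPDF p (t + s) = ENNReal.ofReal (exp (-(p * s))) * exponentialPDF p t := by
  rw [exponentialPDF_of_nonneg (by positivity), exponentialPDF_of_nonneg ht,
    ← ENNReal.ofReal_mul (exp_nonneg _), mul_add, neg_add, exp_add]
  ring_nf

theorem setLIntegral_Ioi_expMeasure_comp_sub {p s : ℝ} (hs : 0 ≤ s) {G : ℝ → ℝ≥0∞}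
    (hG : Measurable G) :
    ∫⁻ ℓ in Ioi s, G (ℓ - s) ∂expMeasure p
      = ENNReal.ofReal (exp (-(p * s))) * ∫⁻ t, G t ∂expMeasure p := by
  have hshift : ∀ t, (Ici s).indicator (fun ℓ => exponentialPDF p ℓ * G (ℓ - s)) (t + s)
      = ENNReal.ofReal (exp (-(p * s))) * (exponentialPDF p t * G t) := by
    intro t
    rcases le_or_gt 0 t with ht | ht
    · rw [indicator_of_mem (by simpa using ht), add_sub_cancel_right,
        exponentialPDF_add_of_nonneg hs ht, mul_assoc]
    · rw [indicator_of_notMem (by simpa using ht), exponentialPDF_of_neg ht, zero_mul, mul_zero]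
  -- On `Ici s` the translated density agrees with the rescaled one everywhere; on `Ioi s` it
  -- would fail at `t = 0`, where `exponentialPDF p 0 = p`.
  rw [setLIntegral_congr Ioi_ae_eq_Ici, expMeasure_eq_withDensity,
    setLIntegral_withDensity_eq_setLIntegral_mul _ (measurable_exponentialPDF p)
      (g := fun ℓ => G (ℓ - s)) (hG.comp (measurable_sub_const s)) measurableSet_Ici,
    lintegral_withDensity_eq_lintegral_mul _ (measurable_exponentialPDF p) hG,
    ← lintegral_indicator measurableSet_Ici, ← lintegral_add_right_eq_self _ s,
    ← lintegral_const_mul _ ((measurable_exponentialPDF p).mul hG)]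
  exact lintegral_congr hshift

theorem expMeasure_Ioi {p a : ℝ} (hp : 0 < p) (ha : 0 ≤ a) :
    expMeasure p (Ioi a) = ENNReal.ofReal (exp (-(p * a))) := by
  have := isProbabilityMeasure_expMeasure hp
  simpa using setLIntegral_Ioi_expMeasure_comp_sub (p := p) ha (G := fun _ => 1) measurable_const

variable {α β : Type*} [MeasurableSpace α] [MeasurableSpace β]

theorem setLIntegral_prod_expMeasure_window {ν : Measure β} [SFinite ν] {p s : ℝ}
    (hs : 0 ≤ s) {h : β → ℝ} (hh : Measurable h) {G : β × ℝ → ℝ≥0∞} (hG : Measurable G) :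
    ∫⁻ y in {y : β × ℝ | s < y.2 ∧ y.2 ≤ s + h y.1}, G (y.1, y.2 - s) ∂ν.prod (expMeasure p)
      = ENNReal.ofReal (exp (-(p * s)))
          * ∫⁻ y in {y : β × ℝ | y.2 ≤ h y.1}, G y ∂ν.prod (expMeasure p) := by
  have hwindow : ∀ x, {ℓ | s < ℓ ∧ ℓ ≤ s + h x} = (· - s) ⁻¹' Iic (h x) ∩ Ioi s := by
    intro x
    ext ℓ
    simp only [mem_ofPred_eq, mem_inter_iff, mem_Ioi, mem_preimage, mem_Iic, sub_le_iff_le_add',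
      and_comm]
  have hwindow_meas : MeasurableSet {y : β × ℝ | s < y.2 ∧ y.2 ≤ s + h y.1} :=
    (measurableSet_lt measurable_const measurable_snd).inter
      (measurableSet_le measurable_snd ((hh.comp measurable_fst).const_add _))
  have hbelow_meas : MeasurableSet {y : β × ℝ | y.2 ≤ h y.1} :=
    measurableSet_le measurable_snd (hh.comp measurable_fst)
  have hshift : Measurable fun y : β × ℝ => G (y.1, y.2 - s) :=
    hG.comp (measurable_fst.prodMk (measurable_snd.sub_const s))
  rw [setLIntegral_prod_eq_lintegral_setLIntegral_preimage hwindow_meas hshift,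
    setLIntegral_prod_eq_lintegral_setLIntegral_preimage hbelow_meas hG,
    ← lintegral_const_mul' _ _ ofReal_ne_top]
  refine lintegral_congr fun x => ?_
  calc ∫⁻ ℓ in {ℓ | s < ℓ ∧ ℓ ≤ s + h x}, G (x, ℓ - s) ∂expMeasure p
      = ∫⁻ ℓ in Ioi s, (Iic (h x)).indicator (fun t => G (x, t)) (ℓ - s) ∂expMeasure p := by
        rw [hwindow,
          ← setLIntegral_indicator (measurableSet_Iic.preimage (measurable_sub_const s))]
        rfl
    _ = ENNReal.ofReal (exp (-(p * s)))
          * ∫⁻ t, (Iic (h x)).indicator (fun t => G (x, t)) t ∂expMeasure p :=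
        setLIntegral_Ioi_expMeasure_comp_sub hs
          ((hG.comp measurable_prodMk_left).indicator measurableSet_Iic)
    _ = ENNReal.ofReal (exp (-(p * s))) * ∫⁻ t in Iic (h x), G (x, t) ∂expMeasure p := by
        rw [lintegral_indicator measurableSet_Iic]

theorem setLIntegral_prod_lt_snd_expMeasure {μ : Measure α} {p : ℝ} (hp : 0 < p) {X : α → ℝ}
    (hX : Measurable X) (hX_nonneg : ∀ x, 0 ≤ X x) {f : α → ℝ≥0∞} (hf : Measurable f) :
    ∫⁻ y in {y : α × ℝ | X y.1 < y.2}, f y.1 ∂μ.prod (expMeasure p)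
      = ∫⁻ x, f x * ENNReal.ofReal (exp (-(p * X x))) ∂μ := by
  have hset : MeasurableSet {y : α × ℝ | X y.1 < y.2} :=
    measurableSet_lt (hX.comp measurable_fst) measurable_snd
  rw [setLIntegral_prod_eq_lintegral_setLIntegral_preimage hset
    (f := fun y => f y.1) (hf.comp measurable_fst)]
  refine lintegral_congr fun x => ?_
  change ∫⁻ _ in Ioi (X x), f x ∂expMeasure p = _
  rw [setLIntegral_const, expMeasure_Ioi hp (hX_nonneg x)]

end ProbabilityTheory

theorem lintegral_rebirth_exponential_factorization_general
    (p : ℝ) (hp : 0 < p)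
    (r : ℕ)
    (Ω : Fin (r - 1) → Type*) [∀ i, MeasurableSpace (Ω i)]
    (P : ∀ i, Measure (Ω i)) [∀ i, IsProbabilityMeasure (P i)]
    (Ωr : Type*) [MeasurableSpace Ωr]
    (Pr : Measure Ωr) [IsProbabilityMeasure Pr]
    (X : ∀ i, Ω i → ℝ) (hX : ∀ i, Measurable (X i)) (hX_nonneg : ∀ i ω, 0 ≤ X i ω)
    (Xr : Ωr → ℝ) (hXr : Measurable Xr)
    (f : ∀ i, Ω i → ℝ≥0) (hf : ∀ i, Measurable (f i))
    (g : Ωr → ℝ → ℝ≥0) (hg : Measurable fun y : Ωr × ℝ => g y.1 y.2) :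
    ∫⁻ (z : (∀ i, Ω i) × (Ωr × ℝ)) in
        {z | (∑ i, X i (z.1 i)) < z.2.2 ∧ z.2.2 ≤ (∑ i, X i (z.1 i)) + Xr z.2.1},
        ((∏ i, (f i (z.1 i) : ℝ≥0∞)) * (g z.2.1 (z.2.2 - ∑ i, X i (z.1 i)) : ℝ≥0∞))
        ∂((Measure.pi P).prod (Pr.prod (expMeasure p)))
      = (∏ i, ∫⁻ (y : Ω i × ℝ) in {y | X i y.1 < y.2}, (f i y.1 : ℝ≥0∞)
            ∂((P i).prod (expMeasure p)))
        * ∫⁻ (y : Ωr × ℝ) in {y | y.2 ≤ Xr y.1}, (g y.1 y.2 : ℝ≥0∞)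
            ∂(Pr.prod (expMeasure p)) := by
  set S : (∀ i, Ω i) → ℝ := fun ω => ∑ i, X i (ω i) with hS_def
  set R := ∫⁻ y in {y : Ωr × ℝ | y.2 ≤ Xr y.1}, (g y.1 y.2 : ℝ≥0∞) ∂Pr.prod (expMeasure p)
  have hwindow : MeasurableSet
      {z : (∀ i, Ω i) × (Ωr × ℝ) | S z.1 < z.2.2 ∧ z.2.2 ≤ S z.1 + Xr z.2.1} := by
    measurability
  have hintegrand : Measurable fun z : (∀ i, Ω i) × (Ωr × ℝ) =>
      (∏ i, (f i (z.1 i) : ℝ≥0∞)) * (g z.2.1 (z.2.2 - S z.1) : ℝ≥0∞) := by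
    fun_prop
  rw [setLIntegral_prod_eq_lintegral_setLIntegral_preimage hwindow hintegrand]
  simp only [preimage_ofPred_eq]
  calc _ = ∫⁻ ω, (∏ i, (f i (ω i) : ℝ≥0∞)) * ENNReal.ofReal (exp (-(p * S ω))) * R
          ∂Measure.pi P := by
        refine lintegral_congr fun ω => ?_
        rw [lintegral_const_mul _ (by fun_prop), mul_assoc, ← setLIntegral_prod_expMeasure_window
          (Finset.sum_nonneg fun i _ => hX_nonneg i (ω i)) hXr hg.coe_nnreal_ennreal]
    _ = (∫⁻ ω, ∏ i, (f i (ω i) : ℝ≥0∞) * ENNReal.ofReal (exp (-(p * X i (ω i)))) ∂Measure.pi P)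
          * R := by
        rw [← lintegral_mul_const _ (by fun_prop)]
        simp only [hS_def, ofReal_exp_neg_mul_sum, Finset.prod_mul_distrib]
    _ = _ := by
        rw [lintegral_pi_prod_eq_prod P
          (F := fun i x => (f i x : ℝ≥0∞) * ENNReal.ofReal (exp (-(p * X i x)))) (by fun_prop)]
        simp only [setLIntegral_prod_lt_snd_expMeasure hp (hX _) (hX_nonneg _)
          (hf _).coe_nnreal_ennreal]

/-- The Fubini-type computational core of Lemma 4.2 of the paper.  With `r ≥ 2`
probability spaces (here the first `r-1` are indexed by `Fin (r-1)` and the `r`-th one is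
`Ωr`), nonnegative measurable `X_i`, nonnegative measurable `f_i` (`1 ≤ i ≤ r-1`) and
`g` on `Ω_r × [0,∞)`, `S(ω) = ∑_{i=1}^{r-1} X_i(ω_i)`, and `μ_p` the exponential
distribution of rate `p > 0`:
`∫ 1_{S(ω) < ℓ ≤ S(ω)+X_r(ω_r)} ∏ f_i(ω_i) · g(ω_r, ℓ - S(ω)) d(P_1 ⊗ ⋯ ⊗ P_r ⊗ μ_p)
  = ∏_i ∫ f_i(ω_i) 1_{X_i(ω_i) < ℓ_i} d(P_i ⊗ μ_p) · ∫ g(ω_r, ℓ_r) 1_{ℓ_r ≤ X_r(ω_r)} d(P_r ⊗ μ_p)`. -/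
theorem lintegral_rebirth_exponential_factorization
    (p : ℝ) (hp : 0 < p)
    (r : ℕ) (hr : 2 ≤ r)
    (Ω : Fin (r - 1) → Type*) [∀ i, MeasurableSpace (Ω i)]
    (P : ∀ i, Measure (Ω i)) [∀ i, IsProbabilityMeasure (P i)]
    (Ωr : Type*) [MeasurableSpace Ωr]
    (Pr : Measure Ωr) [IsProbabilityMeasure Pr]
    (X : ∀ i, Ω i → ℝ) (hX : ∀ i, Measurable (X i)) (hX_nonneg : ∀ i ω, 0 ≤ X i ω)
    (Xr : Ωr → ℝ) (hXr : Measurable Xr) (hXr_nonneg : ∀ ω, 0 ≤ Xr ω)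
    (f : ∀ i, Ω i → ℝ≥0) (hf : ∀ i, Measurable (f i))
    (g : Ωr → ℝ → ℝ≥0) (hg : Measurable fun y : Ωr × ℝ => g y.1 y.2) :
    ∫⁻ (z : (∀ i, Ω i) × (Ωr × ℝ)) in
        {z | (∑ i, X i (z.1 i)) < z.2.2 ∧ z.2.2 ≤ (∑ i, X i (z.1 i)) + Xr z.2.1},
        ((∏ i, (f i (z.1 i) : ℝ≥0∞)) * (g z.2.1 (z.2.2 - ∑ i, X i (z.1 i)) : ℝ≥0∞))
        ∂((Measure.pi P).prod (Pr.prod (expMeasure p)))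
      = (∏ i, ∫⁻ (y : Ω i × ℝ) in {y | X i y.1 < y.2}, (f i y.1 : ℝ≥0∞)
            ∂((P i).prod (expMeasure p)))
        * ∫⁻ (y : Ωr × ℝ) in {y | y.2 ≤ Xr y.1}, (g y.1 y.2 : ℝ≥0∞)
            ∂(Pr.prod (expMeasure p)) :=
  lintegral_rebirth_exponential_factorization_general p hp r Ω P Ωr Pr X hX hX_nonneg Xr hXr f hf g
    hg
end

section
/- Let p > 0, let r ≥ 2, let (Ω_i, 𝓕_i, P_i), 1 ≤ i ≤ r, be probability spaces, let X_i : Ω_i → [0,∞) be measurable with P_r(X_r > 0) > 0, let I be a nonempty set, and equip the function space ℝ^I with the product σ-algebra (the σ-algebra of cylinder sets) and pointwise addition. Let F_i : Ω_i → ℝ^I for 1 ≤ i ≤ r−1 and G : Ω_r × [0,∞) → ℝ^I be measurable, and let B ⊆ ℝ^I be measurable. Write S(ω) = ∑_{i=1}^{r−1} X_i(ω_i) and let Q = P_1 ⊗ ⋯ ⊗ P_r ⊗ μ_p, with coordinate ℓ on the last factor. If Q( ∑_{i=1}^{r−1} F_i(ω_i) + G(ω_r, ℓ) ∈ B ) =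 1, then Q( ∑_{i=1}^{r−1} F_i(ω_i) + G(ω_r, ℓ − S(ω)) ∈ B │ S(ω) < ℓ ≤ S(ω) + X_r(ω_r) ) = 1. -/
/-!
The exponential law and Lebesgue measure on `[0, ∞)` have the same null sets, and Lebesgue
measure is translation invariant; hence a property holding for `μ_p`-a.e. `ℓ` also holds for
`ℓ - a` for `μ_p`-a.e. `ℓ ≥ a`. Applied fibrewise (Fubini, with `a = S(ω)`), the unconditioned
almost sure property transfers to almost every point of the conditioning event
`S < ℓ ≤ S + X_r`, and that event has positive probability because `μ_p` charges every interval
`(S, S + X_r]` with `X_r > 0`.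
-/

open MeasureTheory ProbabilityTheory Set Filter

namespace ProbabilityTheory

variable {p : ℝ}

lemma exponentialPDF_ne_zero_iff (hp : 0 < p) {x : ℝ} : exponentialPDF p x ≠ 0 ↔ 0 ≤ x := by
  rcases lt_or_ge x 0 with hx | hx
  · simp [exponentialPDF_of_neg hx, hx]
  · simp only [exponentialPDF_of_nonneg hx, ne_eq, ENNReal.ofReal_eq_zero, not_le, hx, iff_true]
    positivity

lemma ae_expMeasure (hp : 0 < p) : ae (expMeasure p) = ae (volume.restrict (Ici 0)) := by
  refine Filter.ext' fun P => ?_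
  change (∀ᵐ x ∂volume.withDensity (exponentialPDF p), P x) ↔ _
  rw [ae_withDensity_iff (f := exponentialPDF p)
    (measurable_exponentialPDFReal p).ennreal_ofReal, ae_restrict_iff' measurableSet_Ici]
  simp only [exponentialPDF_ne_zero_iff hp, mem_Ici]

lemma ae_expMeasure_sub (hp : 0 < p) (a : ℝ) {P : ℝ → Prop}
    (h : ∀ᵐ x ∂expMeasure p, P x) : ∀ᵐ x ∂expMeasure p, a ≤ x → P (x - a) := by
  rw [ae_expMeasure hp, ae_restrict_iff' measurableSet_Ici] at h ⊢
  filter_upwards [(measurePreserving_sub_right volume a).quasiMeasurePreserving.ae h]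
    with x hx _ hax
  exact hx (sub_nonneg.2 hax)

lemma expMeasure_Ioc_ne_zero (hp : 0 < p) {a b : ℝ} (ha : 0 ≤ a) (hab : a < b) :
    expMeasure p (Ioc a b) ≠ 0 := by
  rw [Ne, measure_eq_zero_iff_ae_notMem, ae_expMeasure hp, ← measure_eq_zero_iff_ae_notMem,
    Measure.restrict_apply measurableSet_Ioc,
    inter_eq_left.2 (Ioc_subset_Ioi_self.trans (Ioi_subset_Ici ha)), Real.volume_Ioc]
  simpa using hab

section Product

variable {α β : Type*} [MeasurableSpace α] [MeasurableSpace β] {μ : Measure α} {ν : Measure β}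

lemma ae_prod_prod_expMeasure_sub [SFinite μ] [SFinite ν] (hp : 0 < p) {s : α → ℝ}
    (hs : Measurable s) {T : Set (α × β × ℝ)} (hT : MeasurableSet T)
    (h : ∀ᵐ z ∂μ.prod (ν.prod (expMeasure p)), z ∈ T) :
    ∀ᵐ z ∂μ.prod (ν.prod (expMeasure p)), s z.1 ≤ z.2.2 → (z.1, z.2.1, z.2.2 - s z.1) ∈ T := by
  have := isProbabilityMeasure_expMeasure hp
  have hshift :
      MeasurableSet {z : α × β × ℝ | s z.1 ≤ z.2.2 → (z.1, z.2.1, z.2.2 - s z.1) ∈ T} :=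
    have hsz : Measurable fun z : α × β × ℝ => s z.1 := hs.comp measurable_fst
    (measurableSet_le hsz measurable_snd.snd).imp <| hT.preimage <|
      measurable_fst.prodMk <| measurable_snd.fst.prodMk <| measurable_snd.snd.sub hsz
  refine (Measure.ae_prod_iff_ae_ae hshift).2 ?_
  filter_upwards [Measure.ae_ae_of_ae_prod h] with x hx
  refine (Measure.ae_prod_iff_ae_ae (measurable_prodMk_left hshift)).2 ?_
  filter_upwards [Measure.ae_ae_of_ae_prod hx] with y hy
  exact ae_expMeasure_sub hp (s x) (P := fun ℓ => (x, y, ℓ) ∈ T) hy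

lemma prod_prod_expMeasure_Ioc_ne_zero [NeZero μ] [SFinite ν] (hp : 0 < p) {s : α → ℝ}
    (hs : ∀ x, 0 ≤ s x) {t : β → ℝ} (ht : ν {y | 0 < t y} ≠ 0) :
    μ.prod (ν.prod (expMeasure p)) {z | s z.1 < z.2.2 ∧ z.2.2 ≤ s z.1 + t z.2.1} ≠ 0 := by
  have := isProbabilityMeasure_expMeasure hp
  intro h
  rw [measure_eq_zero_iff_ae_notMem] at h
  obtain ⟨x, hx⟩ := (Measure.ae_ae_of_ae_prod h).exists
  refine ht (measure_eq_zero_iff_ae_notMem.2 ?_)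
  filter_upwards [Measure.ae_ae_of_ae_prod hx] with y hy hty
  exact expMeasure_Ioc_ne_zero hp (hs x) (lt_add_of_pos_right _ hty)
    (measure_eq_zero_iff_ae_notMem.2 hy)

end Product

lemma cond_eq_one_of_ae_mem_imp {Ω : Type*} [MeasurableSpace Ω] {μ : Measure Ω}
    [IsFiniteMeasure μ] {s t : Set Ω} (hs : MeasurableSet s) (hμs : μ s ≠ 0)
    (h : ∀ᵐ x ∂μ, x ∈ s → x ∈ t) :
    μ[t|s] = 1 := by
  have := cond_isProbabilityMeasure hμs
  have hcond : ∀ᵐ x ∂μ[|s], x ∈ t := Measure.ae_smul_measure ((ae_restrict_iff' hs).2 h) _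
  rw [← measure_univ (μ := μ[|s])]
  exact measure_congr (ae_eq_univ.2 (ae_iff.1 hcond))

end ProbabilityTheory

theorem cond_rebirth_exponential_ae_transfer_general
    (p : ℝ) (hp : 0 < p)
    (r : ℕ)
    (Ω : Fin (r - 1) → Type*) [∀ i, MeasurableSpace (Ω i)]
    (P : ∀ i, Measure (Ω i)) [∀ i, IsProbabilityMeasure (P i)]
    (Ωr : Type*) [MeasurableSpace Ωr]
    (Pr : Measure Ωr) [IsProbabilityMeasure Pr]
    (X : ∀ i, Ω i → ℝ) (hX : ∀ i, Measurable (X i)) (hX_nonneg : ∀ i ω, 0 ≤ X i ω)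
    (Xr : Ωr → ℝ) (hXr : Measurable Xr)
    (hXr_pos : 0 < Pr {ω | 0 < Xr ω})
    (I : Type*)
    (F : ∀ i, Ω i → (I → ℝ)) (hF : ∀ i, Measurable (F i))
    (G : Ωr → ℝ → (I → ℝ)) (hG : Measurable fun y : Ωr × ℝ => G y.1 y.2)
    (B : Set (I → ℝ)) (hB : MeasurableSet B)
    (hone : ((Measure.pi P).prod (Pr.prod (expMeasure p)))
        {z : (∀ i, Ω i) × (Ωr × ℝ) |
          (∑ i, F i (z.1 i)) + G z.2.1 z.2.2 ∈ B} = 1) :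
    ((Measure.pi P).prod (Pr.prod (expMeasure p)))[|
        {z : (∀ i, Ω i) × (Ωr × ℝ) |
          (∑ i, X i (z.1 i)) < z.2.2 ∧ z.2.2 ≤ (∑ i, X i (z.1 i)) + Xr z.2.1}]
      {z : (∀ i, Ω i) × (Ωr × ℝ) |
        (∑ i, F i (z.1 i)) + G z.2.1 (z.2.2 - ∑ i, X i (z.1 i)) ∈ B} = 1 := by
  have := isProbabilityMeasure_expMeasure hp
  have hS : Measurable fun ω : ∀ i, Ω i => ∑ i, X i (ω i) := by fun_prop
  have hC₀ : MeasurableSet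
      {z : (∀ i, Ω i) × (Ωr × ℝ) | (∑ i, F i (z.1 i)) + G z.2.1 z.2.2 ∈ B} :=
    (by fun_prop : Measurable fun z : (∀ i, Ω i) × (Ωr × ℝ) =>
      (∑ i, F i (z.1 i)) + G z.2.1 z.2.2) hB
  have hA : MeasurableSet {z : (∀ i, Ω i) × (Ωr × ℝ) |
      (∑ i, X i (z.1 i)) < z.2.2 ∧ z.2.2 ≤ (∑ i, X i (z.1 i)) + Xr z.2.1} := by
    measurability
  have hS_nonneg (ω : ∀ i, Ω i) : 0 ≤ ∑ i, X i (ω i) :=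
    Finset.sum_nonneg fun i _ => hX_nonneg i (ω i)
  refine cond_eq_one_of_ae_mem_imp hA
    (prod_prod_expMeasure_Ioc_ne_zero hp hS_nonneg hXr_pos.ne') ?_
  have hae : ∀ᵐ z ∂(Measure.pi P).prod (Pr.prod (expMeasure p)),
      (∑ i, F i (z.1 i)) + G z.2.1 z.2.2 ∈ B :=
    (ae_iff_measure_eq hC₀.nullMeasurableSet).2 (by rw [hone, measure_univ])
  filter_upwards [ae_prod_prod_expMeasure_sub hp hS hC₀ hae] with z hz hzA
  exact hz hzA.1.le

/-- The abstraction of Theorem 4.3 (theo-n1.1) of the paper.  With `r ≥ 2` probability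
spaces (the first `r-1` indexed by `Fin (r-1)`, the `r`-th being `Ωr`), nonnegative
measurable `X_i` with `P_r(X_r > 0) > 0`, measurable maps `F_i : Ω_i → ℝ^I` and
`G : Ω_r × [0,∞) → ℝ^I` into the function space `ℝ^I` with the σ-algebra of cylinder
sets and pointwise addition, measurable `B ⊆ ℝ^I`, `S(ω) = ∑_{i=1}^{r-1} X_i(ω_i)`,
`μ_p` the exponential distribution of rate `p > 0`, and `Q = P_1 ⊗ ⋯ ⊗ P_r ⊗ μ_p`:
if `Q(∑_{i=1}^{r-1} F_i(ω_i) + G(ω_r, ℓ) ∈ B) = 1` then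
`Q(∑_{i=1}^{r-1} F_i(ω_i) + G(ω_r, ℓ - S(ω)) ∈ B │ S(ω) < ℓ ≤ S(ω) + X_r(ω_r)) = 1`. -/
theorem cond_rebirth_exponential_ae_transfer
    (p : ℝ) (hp : 0 < p)
    (r : ℕ) (hr : 2 ≤ r)
    (Ω : Fin (r - 1) → Type*) [∀ i, MeasurableSpace (Ω i)]
    (P : ∀ i, Measure (Ω i)) [∀ i, IsProbabilityMeasure (P i)]
    (Ωr : Type*) [MeasurableSpace Ωr]
    (Pr : Measure Ωr) [IsProbabilityMeasure Pr]
    (X : ∀ i, Ω i → ℝ) (hX : ∀ i, Measurable (X i)) (hX_nonneg : ∀ i ω, 0 ≤ X i ω)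
    (Xr : Ωr → ℝ) (hXr : Measurable Xr) (hXr_nonneg : ∀ ω, 0 ≤ Xr ω)
    (hXr_pos : 0 < Pr {ω | 0 < Xr ω})
    (I : Type*) [Nonempty I]
    (F : ∀ i, Ω i → (I → ℝ)) (hF : ∀ i, Measurable (F i))
    (G : Ωr → ℝ → (I → ℝ)) (hG : Measurable fun y : Ωr × ℝ => G y.1 y.2)
    (B : Set (I → ℝ)) (hB : MeasurableSet B)
    (hone : ((Measure.pi P).prod (Pr.prod (expMeasure p)))
        {z : (∀ i, Ω i) × (Ωr × ℝ) |
          (∑ i, F i (z.1 i)) + G z.2.1 z.2.2 ∈ B} = 1) :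
    ((Measure.pi P).prod (Pr.prod (expMeasure p)))[|
        {z : (∀ i, Ω i) × (Ωr × ℝ) |
          (∑ i, X i (z.1 i)) < z.2.2 ∧ z.2.2 ≤ (∑ i, X i (z.1 i)) + Xr z.2.1}]
      {z : (∀ i, Ω i) × (Ωr × ℝ) |
        (∑ i, F i (z.1 i)) + G z.2.1 (z.2.2 - ∑ i, X i (z.1 i)) ∈ B} = 1 :=
  cond_rebirth_exponential_ae_transfer_general p hp r Ω P Ωr Pr X hX hX_nonneg Xr hXr hXr_pos I F hF
    G hG B hB hone
end
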